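/- Let n ≥ 1, 1 < p < ∞, 0 < q₁ < p−1, 0 < q₂ < p−1 and 0 < α < n/p. There exists a constant λ₁ > 0 depending only on n, p, α, q₁ and q₂ such that for every nonnegative Radon measure σ on ℝⁿ, the functions u₀ = λ₁ (W_{α,p}σ)^{γ₁} and v₀ = λ₁ (W_{α,p}σ)^{γ₂} satisfy u₀(x) ≤ W_{α,p}(v₀^{q₁} dσ)(x) and v₀(x) ≤ W_{α,p}(u₀^{q₂} dσ)(x) for every x ∈ ℝⁿ; that is, (u₀, v₀) is a subsolution of the Wolff integral system. -/

import Mathlib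

/-!
Fix `x` and write `G(t) = ∫_t^∞ (σ(B(x,s))/s^{n-αp})^{1/(p-1)} ds/s`, so that `G(0) = W_{α,p}σ(x)`.
If `y ∈ B(x,t)` then `B(x,s) ⊆ B(y,2s)` for `s > t`, and substituting `s ↦ 2s` in the Wolff
potential at `y` gives `W_{α,p}σ(y) ≥ c G(t)` with `c = 2^{-(n-αp)/(p-1)}`. Hence, writing
`(γ_a, γ_b, q)` for `(γ₁, γ₂, q₁)` or `(γ₂, γ₁, q₂)`, on `B(x,t)` the density
`(λ (W_{α,p}σ)^{γ_b})^q` is at least `(λ (c G(t))^{γ_b})^q`, and the Wolff potential of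
this density at `x` is at least `λ^{q/(p-1)} c^β ∫_0^∞ G^β (-dG)` with `β = γ_b q/(p-1)`.
A level-set argument (`G ≥ G(0)/2` on a set of `-dG`-mass at least `G(0)/2`) bounds the last
integral below by `(G(0)/2)^{1+β}`, and `1 + β = γ_a` by the choice of `γ₁, γ₂`. Finally
`λ ≤ C λ^{q/(p-1)}` for all small `λ > 0` because `q < p - 1`.
-/

open MeasureTheory Metric Set ENNReal

noncomputable section

/-- Euclidean space `ℝⁿ`. -/
abbrev Rn (n : ℕ) := EuclideanSpace ℝ (Fin n)

/-- The Wolff potential `W_{α,p}μ(x) = ∫₀^∞ (μ(B(x,t))/t^{n−αp})^{1/(p−1)} dt/t`. -/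
def wolff (n : ℕ) (α p : ℝ) (μ : Measure (Rn n)) (x : Rn n) : ℝ≥0∞ :=
  ∫⁻ t in Ioi (0 : ℝ),
    (μ (ball x t) / ENNReal.ofReal (t ^ ((n : ℝ) - α * p))) ^ (1 / (p - 1))
      * ENNReal.ofReal (1 / t)

/-- `γ₁ = (p−1)(p−1+q₁)/((p−1)²−q₁q₂)`. -/
def gamma1 (p q₁ q₂ : ℝ) : ℝ := (p - 1) * (p - 1 + q₁) / ((p - 1) ^ 2 - q₁ * q₂)

/-- `γ₂ = (p−1)(p−1+q₂)/((p−1)²−q₁q₂)`. -/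
def gamma2 (p q₁ q₂ : ℝ) : ℝ := (p - 1) * (p - 1 + q₂) / ((p - 1) ^ 2 - q₁ * q₂)

/-- The Riesz potential `I_β μ(x) = ∫ |x−y|^{β−n} dμ(y)`. -/
def riesz (n : ℕ) (β : ℝ) (μ : Measure (Rn n)) (x : Rn n) : ℝ≥0∞ :=
  ∫⁻ y, ENNReal.ofReal (‖x - y‖ ^ (β - (n : ℝ))) ∂μ

/-- The `(α,p)`-capacity of a set `E ⊆ ℝⁿ`. -/
def capacity (n : ℕ) (α p : ℝ) (E : Set (Rn n)) : ℝ≥0∞ :=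
  ⨅ (f : Rn n → ℝ≥0∞) (_ : Measurable f)
    (_ : ∀ x ∈ E, 1 ≤ riesz n α (volume.withDensity f) x),
    ∫⁻ x, f x ^ p

/-- Condition (F): `∫₁^∞ (σ(B(0,t))/t^{n−αp})^{1/(p−1)} dt/t < ∞`. -/
def condF (n : ℕ) (α p : ℝ) (σ : Measure (Rn n)) : Prop :=
  ∫⁻ t in Ioi (1 : ℝ),
    (σ (ball (0 : Rn n) t) / ENNReal.ofReal (t ^ ((n : ℝ) - α * p))) ^ (1 / (p - 1))
      * ENNReal.ofReal (1 / t) < ∞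

/-- Condition (C): `σ(E) ≤ C_σ · cap_{α,p}(E)` for all compact sets `E`. -/
def condC (n : ℕ) (α p Cσ : ℝ) (σ : Measure (Rn n)) : Prop :=
  ∀ E : Set (Rn n), IsCompact E → σ E ≤ ENNReal.ofReal Cσ * capacity n α p E

/-- `u ∈ L^s_loc(ℝⁿ, dσ)`: `∫_B u^s dσ < ∞` for every ball `B`. -/
def locIn (n : ℕ) (σ : Measure (Rn n)) (s : ℝ) (u : Rn n → ℝ≥0∞) : Prop :=
  ∀ (x : Rn n) (r : ℝ), ∫⁻ y in ball x r, u y ^ s ∂σ < ∞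

/-- `(u,v)` is a solution of the Wolff integral system. -/
def isWolffSol (n : ℕ) (α p q₁ q₂ : ℝ) (σ : Measure (Rn n))
    (u v : Rn n → ℝ≥0∞) : Prop :=
  Measurable u ∧ Measurable v ∧ locIn n σ q₂ u ∧ locIn n σ q₁ v ∧
  (∀ᵐ x ∂σ, u x = wolff n α p (σ.withDensity fun y => v y ^ q₁) x) ∧
  (∀ᵐ x ∂σ, v x = wolff n α p (σ.withDensity fun y => u y ^ q₂) x)

/-- `(u,v)` is a supersolution of the Wolff integral system. -/
def isWolffSuper (n : ℕ) (α p q₁ q₂ : ℝ) (σ : Measure (Rn n))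
    (u v : Rn n → ℝ≥0∞) : Prop :=
  Measurable u ∧ Measurable v ∧ locIn n σ q₂ u ∧ locIn n σ q₁ v ∧
  (∀ᵐ x ∂σ, wolff n α p (σ.withDensity fun y => v y ^ q₁) x ≤ u x) ∧
  (∀ᵐ x ∂σ, wolff n α p (σ.withDensity fun y => u y ^ q₂) x ≤ v x)

/-- `(u,v)` is nontrivial: neither `u` nor `v` vanishes `σ`-a.e. -/
def nontrivialPair (n : ℕ) (σ : Measure (Rn n)) (u v : Rn n → ℝ≥0∞) : Prop :=
  ¬ (∀ᵐ x ∂σ, u x = 0) ∧ ¬ (∀ᵐ x ∂σ, v x = 0)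

/-- Condition (W_λ). -/
def condW (n : ℕ) (α p q₁ q₂ lam : ℝ) (σ : Measure (Rn n)) : Prop :=
  ∀ᵐ x ∂(volume : Measure (Rn n)),
    (wolff n α p (σ.withDensity fun y => (wolff n α p σ y) ^ (gamma2 p q₁ q₂ * q₁)) x
      ≤ ENNReal.ofReal lam *
        (wolff n α p σ x + (wolff n α p σ x) ^ gamma1 p q₁ q₂)) ∧
    (wolff n α p (σ.withDensity fun y => (wolff n α p σ y) ^ (gamma1 p q₁ q₂ * q₂)) x
      ≤ ENNReal.ofReal lam *
        (wolff n α p σ x + (wolff n α p σ x) ^ gamma2 p q₁ q₂)) ∧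
    (wolff n α p σ x + (wolff n α p σ x) ^ gamma1 p q₁ q₂ < ∞) ∧
    (wolff n α p σ x + (wolff n α p σ x) ^ gamma2 p q₁ q₂ < ∞)

open Filter Topology

theorem setLIntegral_Ioi_comp_mul_left {c : ℝ} (hc : 0 < c) (f : ℝ → ℝ≥0∞) (a : ℝ) :
    ENNReal.ofReal c * ∫⁻ s in Ioi a, f (c * s) = ∫⁻ s in Ioi (c * a), f s := by
  have hemb := measurableEmbedding_mulLeft₀ hc.ne'
  conv_rhs => rw [← Real.smul_map_volume_mul_left hc.ne']
  rw [Measure.restrict_smul, lintegral_smul_measure, hemb.restrict_map, hemb.lintegral_map,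
    preimage_const_mul_Ioi₀ _ hc, mul_div_cancel_left₀ _ hc.ne', abs_of_pos hc, smul_eq_mul]

theorem measure_le_of_forall_measure_Ioi_le {ν : Measure ℝ} [NullSingletonClass ν] {B : Set ℝ}
    (hB : BddBelow B) {c : ℝ≥0∞} (h : ∀ t ∈ B, ν (Ioi t) ≤ c) : ν B ≤ c := by
  rcases B.eq_empty_or_nonempty with rfl | hne
  · simp
  obtain ⟨u, hu, hlim, huB⟩ := exists_seq_tendsto_sInf hne hB
  have hIoi : Ioi (sInf B) = ⋃ k, Ioi (u k) := by
    refine Subset.antisymm (fun x hx => ?_) (iUnion_subset fun k => Ioi_subset_Ioi ?_)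
    · exact mem_iUnion.2 ((hlim.eventually (eventually_lt_nhds hx)).exists)
    · exact csInf_le hB (huB k)
  calc ν B ≤ ν (Ici (sInf B)) := measure_mono fun t ht => csInf_le hB ht
    _ = ν (Ioi (sInf B)) := measure_congr Ioi_ae_eq_Ici.symm
    _ = ⨆ k, ν (Ioi (u k)) := by
      rw [hIoi, Monotone.measure_iUnion fun k l hkl => Ioi_subset_Ioi (hu hkl)]
    _ ≤ c := iSup_le fun k => h _ (huB k)

theorem rpow_le_setLIntegral_measure_Ioi_rpow {ν : Measure ℝ} [NullSingletonClass ν] {a β : ℝ}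
    (hβ : 0 ≤ β) {c : ℝ≥0∞} (hc : c ≠ ∞) (h2c : 2 * c ≤ ν (Ioi a)) :
    c ^ (1 + β) ≤ ∫⁻ t in Ioi a, ν (Ioi t) ^ β ∂ν := by
  have hanti : Antitone fun t => ν (Ioi t) := fun s t hst => measure_mono (Ioi_subset_Ioi hst)
  set T := {t | c ≤ ν (Ioi t)}
  have hsmall : ν (Ioi a \ T) ≤ c :=
    measure_le_of_forall_measure_Ioi_le ⟨a, fun t ht => le_of_lt ht.1⟩
      fun t ht => le_of_lt (not_le.1 ht.2)
  have hlarge : c ≤ ν (Ioi a ∩ T) := by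
    refine ENNReal.le_of_add_le_add_right hc ?_
    calc c + c = 2 * c := (two_mul c).symm
      _ ≤ ν (Ioi a ∩ T) + ν (Ioi a \ T) := h2c.trans (measure_le_inter_add_sdiff ν _ _)
      _ ≤ ν (Ioi a ∩ T) + c := by gcongr
  calc c ^ (1 + β) = c ^ β * c := by
        rw [ENNReal.rpow_add_of_nonneg 1 β zero_le_one hβ, ENNReal.rpow_one, mul_comm]
    _ ≤ c ^ β * ν (Ioi a ∩ T) := by gcongr
    _ = ∫⁻ _ in Ioi a ∩ T, c ^ β ∂ν := (setLIntegral_const _ _).symm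
    _ ≤ ∫⁻ t in Ioi a ∩ T, ν (Ioi t) ^ β ∂ν :=
      setLIntegral_mono (hanti.measurable.pow_const β) fun t ht => by gcongr; exact ht.2
    _ ≤ ∫⁻ t in Ioi a, ν (Ioi t) ^ β ∂ν := lintegral_mono_set inter_subset_left

theorem measure_Ioi_div_two_rpow_le_setLIntegral {ν : Measure ℝ} [NullSingletonClass ν] {β : ℝ}
    (hβ : 0 ≤ β) (a : ℝ) : (ν (Ioi a) / 2) ^ (1 + β) ≤ ∫⁻ t in Ioi a, ν (Ioi t) ^ β ∂ν := by
  have hγ : 0 < 1 + β := by linarith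
  rw [← ENNReal.le_rpow_inv_iff hγ]
  refine le_of_forall_lt_imp_le_of_dense fun c hc => ?_
  rw [ENNReal.le_rpow_inv_iff hγ]
  refine rpow_le_setLIntegral_measure_Ioi_rpow hβ (ne_top_of_lt hc) ?_
  rw [mul_comm]
  exact ((ENNReal.lt_div_iff_mul_lt (by simp) (by simp)).1 hc).le

theorem setLIntegral_Ioi_div_two_rpow_le {g : ℝ → ℝ≥0∞} (hg : Measurable g) {β : ℝ}
    (hβ : 0 ≤ β) (a : ℝ) :
    ((∫⁻ t in Ioi a, g t) / 2) ^ (1 + β) ≤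
      ∫⁻ t in Ioi a, g t * (∫⁻ s in Ioi t, g s) ^ β := by
  have hanti : Antitone fun t => ∫⁻ s in Ioi t, g s := fun s t hst =>
    lintegral_mono_set (Ioi_subset_Ioi hst)
  have := measure_Ioi_div_two_rpow_le_setLIntegral (ν := volume.withDensity g) hβ a
  simp_rw [withDensity_apply _ measurableSet_Ioi] at this
  rwa [setLIntegral_withDensity_eq_setLIntegral_mul _ hg (hanti.measurable.pow_const β)
    measurableSet_Ioi, Pi.mul_def] at this

def wolffIntegrand (n : ℕ) (α p : ℝ) (μ : Measure (Rn n)) (x : Rn n) (t : ℝ) : ℝ≥0∞ :=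
  (μ (ball x t) / ENNReal.ofReal (t ^ ((n : ℝ) - α * p))) ^ (1 / (p - 1))
    * ENNReal.ofReal (1 / t)

/-- The factor lost when a ball `B(x, r)` is replaced by the ball `B(y, 2r) ⊇ B(x, r)`. -/
def wolffDoublingConst (n : ℕ) (α p : ℝ) : ℝ≥0∞ :=
  ((2 : ℝ≥0∞) ^ ((n : ℝ) - α * p))⁻¹ ^ (1 / (p - 1))

section Wolff

variable {n : ℕ} {α p : ℝ}

theorem measurable_wolffIntegrand (μ : Measure (Rn n)) (x : Rn n) :
    Measurable (wolffIntegrand n α p μ x) := by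
  have hball : Monotone fun t : ℝ => μ (ball x t) := fun s t hst =>
    measure_mono (ball_subset_ball hst)
  exact ((hball.measurable.div (by fun_prop)).pow_const _).mul (by fun_prop)

theorem wolffDoublingConst_ne_zero : wolffDoublingConst n α p ≠ 0 := by
  simp [wolffDoublingConst, ENNReal.rpow_eq_zero_iff, ENNReal.rpow_eq_top_iff]

theorem wolffDoublingConst_ne_top : wolffDoublingConst n α p ≠ ∞ := by
  simp [wolffDoublingConst, ENNReal.rpow_eq_zero_iff, ENNReal.rpow_eq_top_iff]

theorem wolffDoublingConst_mul_wolffIntegrand_le (hp : 1 ≤ p) (μ : Measure (Rn n))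
    {x y : Rn n} {r : ℝ} (hr : 0 < r) (hxy : dist x y ≤ r) :
    wolffDoublingConst n α p * wolffIntegrand n α p μ x r ≤
      2 * wolffIntegrand n α p μ y (2 * r) := by
  have he : 0 ≤ 1 / (p - 1) := one_div_nonneg.2 (sub_nonneg.2 hp)
  have hball : ball x r ⊆ ball y (2 * r) := ball_subset_ball' (by linarith)
  have hscale : ENNReal.ofReal ((2 * r) ^ ((n : ℝ) - α * p)) =
      2 ^ ((n : ℝ) - α * p) * ENNReal.ofReal (r ^ ((n : ℝ) - α * p)) := by
    rw [Real.mul_rpow zero_le_two hr.le, ENNReal.ofReal_mul (by positivity),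
      ← ENNReal.ofReal_rpow_of_pos two_pos, ENNReal.ofReal_ofNat]
  have hdiv : ∀ m : ℝ≥0∞, m / (2 ^ ((n : ℝ) - α * p) * ENNReal.ofReal (r ^ ((n : ℝ) - α * p)))
      = (2 ^ ((n : ℝ) - α * p))⁻¹ * (m / ENNReal.ofReal (r ^ ((n : ℝ) - α * p))) := by
    intro m
    rw [div_eq_mul_inv, ENNReal.mul_inv (Or.inr ofReal_ne_top) (Or.inl (by simp)),
      div_eq_mul_inv]
    ring
  have hhalf : ENNReal.ofReal (1 / (2 * r)) = 2⁻¹ * ENNReal.ofReal (1 / r) := by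
    rw [show 1 / (2 * r) = 2⁻¹ * (1 / r) by ring, ENNReal.ofReal_mul (by norm_num),
      ENNReal.ofReal_inv_of_pos two_pos, ENNReal.ofReal_ofNat]
  calc wolffDoublingConst n α p * wolffIntegrand n α p μ x r
      ≤ wolffDoublingConst n α p * ((μ (ball y (2 * r)) /
          ENNReal.ofReal (r ^ ((n : ℝ) - α * p))) ^ (1 / (p - 1)) * ENNReal.ofReal (1 / r)) := by
        unfold wolffIntegrand; gcongr
    _ = 2 * 2⁻¹ * (wolffDoublingConst n α p * ((μ (ball y (2 * r)) /
          ENNReal.ofReal (r ^ ((n : ℝ) - α * p))) ^ (1 / (p - 1)) * ENNReal.ofReal (1 / r))) := by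
        rw [ENNReal.mul_inv_cancel two_ne_zero ofNat_ne_top, one_mul]
    _ = 2 * wolffIntegrand n α p μ y (2 * r) := by
        rw [wolffIntegrand, hscale, hdiv, ENNReal.mul_rpow_of_nonneg _ _ he, hhalf,
          wolffDoublingConst]
        ring

theorem wolffDoublingConst_mul_setLIntegral_le_wolff (hp : 1 ≤ p) (μ : Measure (Rn n))
    {x y : Rn n} {t : ℝ} (hy : y ∈ ball x t) :
    wolffDoublingConst n α p * ∫⁻ s in Ioi t, wolffIntegrand n α p μ x s ≤ wolff n α p μ y := by
  have ht : 0 < t := dist_nonneg.trans_lt (mem_ball'.1 hy)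
  calc wolffDoublingConst n α p * ∫⁻ s in Ioi t, wolffIntegrand n α p μ x s
      = ∫⁻ s in Ioi t, wolffDoublingConst n α p * wolffIntegrand n α p μ x s :=
        (lintegral_const_mul _ (measurable_wolffIntegrand μ x)).symm
    _ ≤ ∫⁻ s in Ioi t, 2 * wolffIntegrand n α p μ y (2 * s) :=
        setLIntegral_mono' measurableSet_Ioi fun s hs =>
          wolffDoublingConst_mul_wolffIntegrand_le hp μ (ht.trans hs)
            ((mem_ball'.1 hy).le.trans (le_of_lt hs))
    _ = ENNReal.ofReal 2 * ∫⁻ s in Ioi t, wolffIntegrand n α p μ y (2 * s) := by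
        rw [ENNReal.ofReal_ofNat,
          lintegral_const_mul (f := fun s => wolffIntegrand n α p μ y (2 * s)) _
            ((measurable_wolffIntegrand μ y).comp (measurable_const_mul 2))]
    _ = ∫⁻ s in Ioi (2 * t), wolffIntegrand n α p μ y s :=
        setLIntegral_Ioi_comp_mul_left two_pos _ t
    _ ≤ wolff n α p μ y := lintegral_mono_set (Ioi_subset_Ioi (by positivity))

theorem setLIntegral_rpow_mul_wolffIntegrand_le_wolff (hp : 1 ≤ p) {μ μ' : Measure (Rn n)}
    {x : Rn n} {C : ℝ → ℝ≥0∞} (hC : ∀ t > 0, C t * μ (ball x t) ≤ μ' (ball x t)) :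
    ∫⁻ t in Ioi 0, C t ^ (1 / (p - 1)) * wolffIntegrand n α p μ x t ≤ wolff n α p μ' x := by
  have he : 0 ≤ 1 / (p - 1) := one_div_nonneg.2 (sub_nonneg.2 hp)
  refine setLIntegral_mono' measurableSet_Ioi fun t ht => ?_
  calc C t ^ (1 / (p - 1)) * wolffIntegrand n α p μ x t
      = (C t * μ (ball x t) / ENNReal.ofReal (t ^ ((n : ℝ) - α * p))) ^ (1 / (p - 1))
          * ENNReal.ofReal (1 / t) := by
        rw [wolffIntegrand, ← mul_assoc, ← ENNReal.mul_rpow_of_nonneg _ _ he, mul_div_assoc]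
    _ ≤ wolffIntegrand n α p μ' x t := by unfold wolffIntegrand; gcongr; exact hC t ht

end Wolff

theorem mul_rpow_wolff_le_wolff_withDensity {n : ℕ} {α p q γa γb : ℝ} (hp : 1 ≤ p)
    (hq : 0 ≤ q) (hγb : 0 ≤ γb) (hγa : γa = 1 + γb * (q / (p - 1))) {Λ : ℝ≥0∞}
    (hΛ : Λ ≤ Λ ^ (q / (p - 1)) * (wolffDoublingConst n α p ^ (γb * (q / (p - 1))) * 2⁻¹ ^ γa))
    (μ : Measure (Rn n)) (x : Rn n) :
    Λ * wolff n α p μ x ^ γa ≤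
      wolff n α p (μ.withDensity fun y => (Λ * wolff n α p μ y ^ γb) ^ q) x := by
  set c := wolffDoublingConst n α p
  set β := γb * (q / (p - 1))
  set G : ℝ → ℝ≥0∞ := fun t => ∫⁻ s in Ioi t, wolffIntegrand n α p μ x s
  have hqe : 0 ≤ q / (p - 1) := div_nonneg hq (sub_nonneg.2 hp)
  have hG : Antitone G := fun s t hst => lintegral_mono_set (Ioi_subset_Ioi hst)
  have hdensity : ∀ t > 0, (Λ * (c * G t) ^ γb) ^ q * μ (ball x t) ≤
      (μ.withDensity fun y => (Λ * wolff n α p μ y ^ γb) ^ q) (ball x t) := by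
    intro t _
    rw [withDensity_apply _ measurableSet_ball, ← setLIntegral_const]
    refine setLIntegral_mono' measurableSet_ball fun y hy => ?_
    gcongr
    exact wolffDoublingConst_mul_setLIntegral_le_wolff hp μ hy
  have hpow : ∀ t, ((Λ * (c * G t) ^ γb) ^ q) ^ (1 / (p - 1)) =
      Λ ^ (q / (p - 1)) * c ^ β * G t ^ β := by
    intro t
    rw [← ENNReal.rpow_mul, mul_one_div, ENNReal.mul_rpow_of_nonneg _ _ hqe, ← ENNReal.rpow_mul,
      ENNReal.mul_rpow_of_nonneg _ _ (mul_nonneg hγb hqe), mul_assoc]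
  calc Λ * wolff n α p μ x ^ γa
      ≤ Λ ^ (q / (p - 1)) * (c ^ β * 2⁻¹ ^ γa) * wolff n α p μ x ^ γa := by gcongr
    _ = Λ ^ (q / (p - 1)) * c ^ β * (wolff n α p μ x / 2) ^ (1 + β) := by
      rw [ENNReal.div_eq_inv_mul, ENNReal.mul_rpow_of_nonneg _ _ (by positivity), hγa]
      ring
    _ ≤ Λ ^ (q / (p - 1)) * c ^ β * ∫⁻ t in Ioi 0, wolffIntegrand n α p μ x t * G t ^ β := by
      gcongr
      exact setLIntegral_Ioi_div_two_rpow_le (measurable_wolffIntegrand μ x) (by positivity) 0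
    _ = ∫⁻ t in Ioi 0, ((Λ * (c * G t) ^ γb) ^ q) ^ (1 / (p - 1)) * wolffIntegrand n α p μ x t := by
      rw [← lintegral_const_mul (f := fun t => wolffIntegrand n α p μ x t * G t ^ β) _
        ((measurable_wolffIntegrand μ x).mul (hG.measurable.pow_const β))]
      refine lintegral_congr fun t => ?_
      rw [hpow]
      ring
    _ ≤ wolff n α p (μ.withDensity fun y => (Λ * wolff n α p μ y ^ γb) ^ q) x :=
      setLIntegral_rpow_mul_wolffIntegrand_le_wolff hp hdensity

theorem eventually_ofReal_le_ofReal_rpow_mul {r : ℝ} (hr : r < 1) {D : ℝ≥0∞} (hD : D ≠ 0) :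
    ∀ᶠ l in 𝓝[>] (0 : ℝ), ENNReal.ofReal l ≤ ENNReal.ofReal l ^ r * D := by
  have hlim : Tendsto (fun l : ℝ => ENNReal.ofReal l ^ (1 - r)) (𝓝[>] 0) (𝓝 0) := by
    have h := ((ENNReal.continuous_rpow_const (y := 1 - r)).comp
      ENNReal.continuous_ofReal).tendsto 0
    rw [Function.comp_apply, ENNReal.ofReal_zero, ENNReal.zero_rpow_of_pos (by linarith)] at h
    exact h.mono_left nhdsWithin_le_nhds
  filter_upwards [hlim.eventually (eventually_lt_nhds (pos_iff_ne_zero.2 hD)),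
    self_mem_nhdsWithin] with l hsmall hpos
  calc ENNReal.ofReal l = ENNReal.ofReal l ^ (1 - r) * ENNReal.ofReal l ^ r := by
        rw [← ENNReal.rpow_add _ _ (ENNReal.ofReal_pos.2 hpos).ne' ofReal_ne_top, sub_add_cancel,
          ENNReal.rpow_one]
    _ ≤ ENNReal.ofReal l ^ r * D := by rw [mul_comm]; gcongr

theorem gamma1_eq_one_add {p q₁ q₂ : ℝ} (hp : p - 1 ≠ 0) (hΔ : (p - 1) ^ 2 - q₁ * q₂ ≠ 0) :
    gamma1 p q₁ q₂ = 1 + gamma2 p q₁ q₂ * (q₁ / (p - 1)) := by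
  have h : gamma2 p q₁ q₂ * (q₁ / (p - 1)) = (p - 1 + q₂) * q₁ / ((p - 1) ^ 2 - q₁ * q₂) := by
    unfold gamma2; field_simp
  rw [h, gamma1, one_add_div hΔ]
  ring

theorem gamma2_eq_one_add {p q₁ q₂ : ℝ} (hp : p - 1 ≠ 0) (hΔ : (p - 1) ^ 2 - q₁ * q₂ ≠ 0) :
    gamma2 p q₁ q₂ = 1 + gamma1 p q₁ q₂ * (q₂ / (p - 1)) := by
  have h : gamma1 p q₁ q₂ * (q₂ / (p - 1)) = (p - 1 + q₁) * q₂ / ((p - 1) ^ 2 - q₁ * q₂) := by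
    unfold gamma1; field_simp
  rw [h, gamma2, one_add_div hΔ]
  ring

theorem wolff_subsolution_general (n : ℕ) (p α q₁ q₂ : ℝ)
    (hp : 1 < p)
    (hq₁ : 0 < q₁) (hq₁' : q₁ < p - 1) (hq₂ : 0 < q₂) (hq₂' : q₂ < p - 1) :
    ∃ lam₁ : ℝ, 0 < lam₁ ∧
      ∀ σ : Measure (Rn n), IsLocallyFiniteMeasure σ →
        (∀ x : Rn n,
          ENNReal.ofReal lam₁ * (wolff n α p σ x) ^ gamma1 p q₁ q₂ ≤
            wolff n α p (σ.withDensity fun y =>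
              (ENNReal.ofReal lam₁ * (wolff n α p σ y) ^ gamma2 p q₁ q₂) ^ q₁) x) ∧
        (∀ x : Rn n,
          ENNReal.ofReal lam₁ * (wolff n α p σ x) ^ gamma2 p q₁ q₂ ≤
            wolff n α p (σ.withDensity fun y =>
              (ENNReal.ofReal lam₁ * (wolff n α p σ y) ^ gamma1 p q₁ q₂) ^ q₂) x) := by
  have hp1 : 0 < p - 1 := by linarith
  have hΔ : 0 < (p - 1) ^ 2 - q₁ * q₂ := by nlinarith
  have hγ₁ : 0 ≤ gamma1 p q₁ q₂ := div_nonneg (by positivity) hΔ.le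
  have hγ₂ : 0 ≤ gamma2 p q₁ q₂ := div_nonneg (by positivity) hΔ.le
  have hD : ∀ γa γb q : ℝ,
      wolffDoublingConst n α p ^ (γb * (q / (p - 1))) * 2⁻¹ ^ γa ≠ 0 := fun _ _ _ =>
    mul_ne_zero (ENNReal.rpow_pos (pos_iff_ne_zero.2 wolffDoublingConst_ne_zero)
      wolffDoublingConst_ne_top).ne' (by simp [ENNReal.rpow_eq_zero_iff])
  obtain ⟨lam₁, ⟨h₁, h₂⟩, hlam₁⟩ :=
    (((eventually_ofReal_le_ofReal_rpow_mul ((div_lt_one hp1).2 hq₁') (hD _ _ _)).and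
      (eventually_ofReal_le_ofReal_rpow_mul ((div_lt_one hp1).2 hq₂') (hD _ _ _))).and
      self_mem_nhdsWithin).exists
  exact ⟨lam₁, hlam₁, fun σ _ =>
    ⟨mul_rpow_wolff_le_wolff_withDensity hp.le hq₁.le hγ₂
      (gamma1_eq_one_add hp1.ne' hΔ.ne') h₁ σ,
    mul_rpow_wolff_le_wolff_withDensity hp.le hq₂.le hγ₁
      (gamma2_eq_one_add hp1.ne' hΔ.ne') h₂ σ⟩⟩

/-- Claim 2 in the proof of Theorem 1.1: for a sufficiently small `λ₁ > 0`, the pair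
`(λ₁ (W_{α,p}σ)^{γ₁}, λ₁ (W_{α,p}σ)^{γ₂})` is a subsolution of the Wolff integral system. -/
theorem wolff_subsolution (n : ℕ) (hn : 1 ≤ n) (p α q₁ q₂ : ℝ)
    (hp : 1 < p) (hα : 0 < α) (hαn : α < (n : ℝ) / p)
    (hq₁ : 0 < q₁) (hq₁' : q₁ < p - 1) (hq₂ : 0 < q₂) (hq₂' : q₂ < p - 1) :
    ∃ lam₁ : ℝ, 0 < lam₁ ∧
      ∀ σ : Measure (Rn n), IsLocallyFiniteMeasure σ →
        (∀ x : Rn n,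
          ENNReal.ofReal lam₁ * (wolff n α p σ x) ^ gamma1 p q₁ q₂ ≤
            wolff n α p (σ.withDensity fun y =>
              (ENNReal.ofReal lam₁ * (wolff n α p σ y) ^ gamma2 p q₁ q₂) ^ q₁) x) ∧
        (∀ x : Rn n,
          ENNReal.ofReal lam₁ * (wolff n α p σ x) ^ gamma2 p q₁ q₂ ≤
            wolff n α p (σ.withDensity fun y =>
              (ENNReal.ofReal lam₁ * (wolff n α p σ y) ^ gamma1 p q₁ q₂) ^ q₂) x) :=
  wolff_subsolution_general n p α q₁ q₂ hp hq₁ hq₁' hq₂ hq₂'
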